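/- arXiv:2405.15724 — 3 statements merged into one kernel-verified Lean document; each statement's English description precedes it below -/
import Mathlib

section
/- Let C ⊆ ℤ² be the configuration consisting of the 16 boundary cells of the 5×5 square {0,…,4}×{0,…,4} (cells (x,y) with 0 ≤ x,y ≤ 4 and x ∈ {0,4} or y ∈ {0,4}) together with the four cells (1,1), (1,3), (3,1), (3,3). Then in any sequence of 3-loose sliding moves starting from C, no move ever removes a module from, places a module into, or moves a module within the central 3×3 square {1,2,3}×{1,2,3}; in particular, C cannot be reconfigured into a single straight line of 20 modules by 3-loose sliding moves. -/
namespace SlidingCubes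

/-- A cell of the `d`-dimensional integer lattice. -/
abbrev Cell (d : ℕ) : Type := Fin d → ℤ

/-- Face adjacency: the cells differ by exactly 1 in exactly one coordinate. -/
def adj {d : ℕ} (a b : Cell d) : Prop :=
  ∃ i, |a i - b i| = 1 ∧ ∀ j, j ≠ i → a j = b j

/-- Edge adjacency: the cells differ by exactly 1 in exactly two coordinates. -/
def edgeAdj {d : ℕ} (a b : Cell d) : Prop :=
  ∃ i j, i ≠ j ∧ |a i - b i| = 1 ∧ |a j - b j| = 1 ∧ ∀ l, l ≠ i → l ≠ j → a l = b l

/-- The axis-aligned `k × ⋯ × k` box of cells whose lowest corner is `c`. -/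
def box {d : ℕ} (k : ℕ) (c : Cell d) : Set (Cell d) :=
  {p | ∀ i, c i ≤ p i ∧ p i < c i + k}

/-- The box `box k c` contains no module of the configuration `C`. -/
def emptyBox {d : ℕ} (k : ℕ) (C : Set (Cell d)) (c : Cell d) : Prop :=
  ∀ p ∈ box k c, p ∉ C

/-- One unit axis-aligned translation step between boxes, landing on a box empty of `C`. -/
def boxStep {d : ℕ} (k : ℕ) (C : Set (Cell d)) (c c' : Cell d) : Prop :=
  adj c c' ∧ emptyBox k C c'

/-- Connectivity of a set of cells under face adjacency. -/
def ConnectedConf {d : ℕ} (S : Set (Cell d)) : Prop :=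
  ∀ a ∈ S, ∀ b ∈ S, Relation.ReflTransGen (fun p q => q ∈ S ∧ adj p q) a b

/-- The (empty) box at `c` is connected to infinity by a sequence of `k×⋯×k` boxes free
of modules of `C`, consecutive boxes differing by a unit axis-aligned translation:
it can reach a box lying beyond all of `C` in some coordinate direction. -/
def boxEscapes {d : ℕ} (k : ℕ) (C : Set (Cell d)) (c : Cell d) : Prop :=
  ∃ c', Relation.ReflTransGen (boxStep k C) c c' ∧ ∃ i, ∀ p ∈ C, p i < c' i

/-- `p` belongs to the outer (infinite) face-adjacency-connected component of the
complement of `C`. -/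
def outer {d : ℕ} (C : Set (Cell d)) (p : Cell d) : Prop :=
  p ∉ C ∧ ∃ q, Relation.ReflTransGen (fun u v => v ∉ C ∧ adj u v) p q ∧
    ∃ i, ∀ r ∈ C, r i < q i

/-- A `k`-loose straight slide in configuration `C`, moving the module at `a`
one unit step to the empty cell `b`: both positions lie in a common `k×⋯×k` box
containing no other module. -/
def LooseStraight {d : ℕ} (k : ℕ) (C : Set (Cell d)) (a b : Cell d) : Prop :=
  a ∈ C ∧ b ∉ C ∧ adj a b ∧
  ∃ c, a ∈ box k c ∧ b ∈ box k c ∧ emptyBox k (C \ {a}) c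

/-- A `k`-loose corner slide in configuration `C`, moving the module at `a` by two
consecutive perpendicular unit steps, through the empty cell `m`, to the empty cell `b`,
around a neighboring module `p` (restoring adjacency with it); each unit step is
contained in a `k×⋯×k` box containing no other module, and the first box can be
translated to the second through boxes containing no other module. -/
def LooseCorner {d : ℕ} (k : ℕ) (C : Set (Cell d)) (a m b : Cell d) : Prop :=
  a ∈ C ∧ m ∉ C ∧ b ∉ C ∧ adj a m ∧ adj m b ∧ edgeAdj a b ∧
  (∃ p ∈ C, adj p a ∧ adj p b) ∧
  ∃ c₁ c₂, a ∈ box k c₁ ∧ m ∈ box k c₁ ∧ m ∈ box k c₂ ∧ b ∈ box k c₂ ∧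
    emptyBox k (C \ {a}) c₁ ∧ emptyBox k (C \ {a}) c₂ ∧
    Relation.ReflTransGen (boxStep k (C \ {a})) c₁ c₂

/-- A `k`-loose sliding move from configuration `C` to `C'`, moving the module at `a`
to the cell `b`; the move keeps the configuration connected. -/
def LooseMoveVia {d : ℕ} (k : ℕ) (C : Set (Cell d)) (a b : Cell d)
    (C' : Set (Cell d)) : Prop :=
  (LooseStraight k C a b ∨ ∃ m, LooseCorner k C a m b) ∧
  C' = insert b (C \ {a}) ∧ ConnectedConf C'

/-- A `k`-loose sliding move from configuration `C` to `C'`. -/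
def LooseMove {d : ℕ} (k : ℕ) (C C' : Set (Cell d)) : Prop :=
  ∃ a b, LooseMoveVia k C a b C'

/-- A `k`-accessible sliding move: a `k`-loose move whose empty `k×⋯×k` box is connected
to infinity through boxes free of modules, both before and after the move. -/
def AccessibleMoveVia {d : ℕ} (k : ℕ) (C : Set (Cell d)) (a b : Cell d)
    (C' : Set (Cell d)) : Prop :=
  LooseMoveVia k C a b C' ∧
  (∃ c, a ∈ box k c ∧ emptyBox k (C \ {a}) c ∧ boxEscapes k (C \ {a}) c) ∧
  (∃ c, b ∈ box k c ∧ emptyBox k (C' \ {b}) c ∧ boxEscapes k (C' \ {b}) c)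

/-- A `k`-accessible sliding move from configuration `C` to `C'`. -/
def AccessibleMove {d : ℕ} (k : ℕ) (C C' : Set (Cell d)) : Prop :=
  ∃ a b, AccessibleMoveVia k C a b C'

/-- `L` is a straight line of `n` consecutive cells in the axis direction `i`. -/
def IsLineDir {d : ℕ} (i : Fin d) (n : ℕ) (L : Set (Cell d)) : Prop :=
  ∃ c : Cell d, L = {p | ∃ t : ℕ, t < n ∧ p = Function.update c i (c i + t)}

/-- `L` is a straight line of `n` consecutive cells in some axis direction. -/
def IsLine {d : ℕ} (n : ℕ) (L : Set (Cell d)) : Prop := ∃ i, IsLineDir i n L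

/-- The axis-aligned bounding box of the union of the boxes `box k c₁` and `box k c₂`. -/
def bboxPair {d : ℕ} (k : ℕ) (c₁ c₂ : Cell d) : Set (Cell d) :=
  {p | ∀ i, min (c₁ i) (c₂ i) ≤ p i ∧ p i < max (c₁ i) (c₂ i) + k}

/-- The configuration `T` has external feature size at least 2:
(a) every empty cell is contained in an empty `2×⋯×2` box; and
(b) for every pair of edge-adjacent empty cells there are empty `2×⋯×2` boxes containing
them that can be slid into each other through empty boxes staying within the bounding
box of their union. -/
def EFS2 {d : ℕ} (T : Set (Cell d)) : Prop :=
  (∀ q, q ∉ T → ∃ c, q ∈ box 2 c ∧ emptyBox 2 T c) ∧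
  (∀ q₁ q₂, q₁ ∉ T → q₂ ∉ T → edgeAdj q₁ q₂ →
    ∃ c₁ c₂, q₁ ∈ box 2 c₁ ∧ q₂ ∈ box 2 c₂ ∧ emptyBox 2 T c₁ ∧ emptyBox 2 T c₂ ∧
      Relation.ReflTransGen
        (fun u v => adj u v ∧ emptyBox 2 T v ∧ box 2 v ⊆ bboxPair 2 c₁ c₂) c₁ c₂)

/-- The cell directly below `p` (in the `z` direction). -/
def below (p : Cell 3) : Cell 3 := Function.update p 2 (p 2 - 1)

/-- The face-adjacency-connected component of `x` within the modules of `R` lying in the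
horizontal layer of `x`. -/
def layerComp (R : Set (Cell 3)) (x : Cell 3) : Set (Cell 3) :=
  {p | Relation.ReflTransGen (fun u v => v ∈ R ∧ v 2 = x 2 ∧ adj u v) x p}

/-- `s` is a slice of `R`: a connected component of the modules of `R` in some horizontal
layer, having at least one module face-adjacent to a cell of the outer empty component. -/
def IsSlice (R : Set (Cell 3)) (s : Set (Cell 3)) : Prop :=
  (∃ x ∈ R, s = layerComp R x) ∧ ∃ m ∈ s, ∃ q, adj m q ∧ outer R q

/-- Adjacency of slices in the slice graph: the two (distinct) slices contain two
(vertically) face-adjacent modules. -/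
def sliceAdj (R : Set (Cell 3)) (s₁ s₂ : Set (Cell 3)) : Prop :=
  IsSlice R s₁ ∧ IsSlice R s₂ ∧ s₁ ≠ s₂ ∧ ∃ p ∈ s₁, ∃ q ∈ s₂, adj p q

/-- A slice is locally maximal: every slice adjacent to it lies at a lower z-coordinate. -/
def LocallyMax (R s : Set (Cell 3)) : Prop :=
  IsSlice R s ∧ ∀ s', sliceAdj R s s' → ∀ p ∈ s', ∀ q ∈ s, p 2 < q 2

/-- A slice is locally minimal: every slice adjacent to it lies at a higher z-coordinate. -/
def LocallyMin (R s : Set (Cell 3)) : Prop :=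
  IsSlice R s ∧ ∀ s', sliceAdj R s s' → ∀ p ∈ s', ∀ q ∈ s, q 2 < p 2

/-- A slice is locally extremal if it is locally maximal or locally minimal. -/
def LocallyExtremal (R s : Set (Cell 3)) : Prop := LocallyMax R s ∨ LocallyMin R s

/-- `s` is a locally maximal slice in the strong sense: every module of `R` outside `s`
that is face-adjacent to a module of `s` lies in the layer directly below `s`. -/
def LocallyMaxSlice (R s : Set (Cell 3)) : Prop :=
  IsSlice R s ∧ ∀ m ∈ R, m ∉ s → (∃ q ∈ s, adj m q) → ∀ q ∈ s, m 2 = q 2 - 1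

/-- A module of the slice `s` is reddish if the cell directly below it is occupied. -/
def reddish (R s : Set (Cell 3)) (m : Cell 3) : Prop := m ∈ s ∧ below m ∈ R

/-- A module of the slice `s` is bluish if the cell directly below it is empty. -/
def bluish (R s : Set (Cell 3)) (m : Cell 3) : Prop := m ∈ s ∧ below m ∉ R

/-- A reddish module is orange if the layer component containing the module below it is
not adjacent to the outer empty component (it is enclosed in a void). -/
def orange (R s : Set (Cell 3)) (m : Cell 3) : Prop :=
  reddish R s m ∧ ∀ p ∈ layerComp R (below m), ∀ q, adj p q → ¬ outer R q

/-- A reddish module is red if it is not orange. -/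
def red (R s : Set (Cell 3)) (m : Cell 3) : Prop := reddish R s m ∧ ¬ orange R s m

/-- A bluish module is green if the cell below it belongs to the outer empty component. -/
def green (R s : Set (Cell 3)) (m : Cell 3) : Prop := bluish R s m ∧ outer R (below m)

/-- A bluish module is blue if the cell below it is empty but not in the outer empty
component. -/
def blue (R s : Set (Cell 3)) (m : Cell 3) : Prop := bluish R s m ∧ ¬ outer R (below m)

/-- One unit step to the left (negative x). -/
def leftOf (p : Cell 3) : Cell 3 := Function.update p 0 (p 0 - 1)
/-- One unit step to the right (positive x). -/
def rightOf (p : Cell 3) : Cell 3 := Function.update p 0 (p 0 + 1)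
/-- One unit step upward (positive y). -/
def upOf (p : Cell 3) : Cell 3 := Function.update p 1 (p 1 + 1)
/-- One unit step downward (negative y). -/
def downOf (p : Cell 3) : Cell 3 := Function.update p 1 (p 1 - 1)

/-- The directed graph `G_s` on the modules of a locally maximal slice `s` of `R`:
leftward edges, upward edges, and edges from the first bluish module of a
bluish-bluish-reddish triple (read left-to-right in a row, or top-to-bottom in a
column) to the reddish module. -/
def gsEdge (R s : Set (Cell 3)) (a b : Cell 3) : Prop :=
  a ∈ s ∧ b ∈ s ∧
  (b = leftOf a ∨ b = upOf a ∨
   (bluish R s a ∧ bluish R s (rightOf a) ∧ reddish R s b ∧ b = rightOf (rightOf a)) ∨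
   (bluish R s a ∧ bluish R s (downOf a) ∧ reddish R s b ∧ b = downOf (downOf a)))

/-- A module of `s` is reachable in `G_s` from some orange module. -/
def reachOrange (R s : Set (Cell 3)) (m : Cell 3) : Prop :=
  ∃ o, orange R s o ∧ Relation.ReflTransGen (gsEdge R s) o m

/-- The set of modules of `s` not reachable in `G_s` from any orange module
(the modules removed by the algorithm). -/
def removedSet (R s : Set (Cell 3)) : Set (Cell 3) :=
  {m | m ∈ s ∧ ¬ reachOrange R s m}

/-- The cell at height `j + 1` directly above `m0`. -/
def aboveCell (m0 : Cell 3) (j : ℕ) : Cell 3 :=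
  Function.update m0 2 (m0 2 + (j : ℤ) + 1)

/-- In the configuration `C`, the module at `x` can travel to the cell `y` via a
sequence of 2-accessible sliding moves moving only this module. -/
def travel (C : Set (Cell 3)) (x y : Cell 3) : Prop :=
  Relation.ReflTransGen
    (fun p q => AccessibleMoveVia 2 ((C \ {x}) ∪ {p}) p q ((C \ {x}) ∪ {q})) x y

/-- The 2D configuration: the boundary of the 5×5 square together with the four cells
(1,1), (1,3), (3,1), (3,3). -/
def hollowSquare : Set (Cell 2) :=
  {p | (0 ≤ p 0 ∧ p 0 ≤ 4 ∧ 0 ≤ p 1 ∧ p 1 ≤ 4 ∧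
        (p 0 = 0 ∨ p 0 = 4 ∨ p 1 = 0 ∨ p 1 = 4)) ∨
       ((p 0 = 1 ∨ p 0 = 3) ∧ (p 1 = 1 ∨ p 1 = 3))}

/-- The central 3×3 square {1,2,3} × {1,2,3}. -/
def centralSquare : Set (Cell 2) :=
  {p | 1 ≤ p 0 ∧ p 0 ≤ 3 ∧ 1 ≤ p 1 ∧ p 1 ≤ 3}

/-! ### Auxiliary material for the impossibility proof -/

/-- The four protected cells (1,1), (1,3), (3,1), (3,3). -/
def K2 : Set (Cell 2) := {p | (p 0 = 1 ∨ p 0 = 3) ∧ (p 1 = 1 ∨ p 1 = 3)}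

/-- The invariant: the central square contains exactly the four protected cells,
and each protected cell has a neighbor in the configuration outside the central square. -/
def Inv (D : Set (Cell 2)) : Prop :=
  D ∩ centralSquare = K2 ∧ ∀ p ∈ K2, ∃ n ∈ D, adj p n ∧ n ∉ centralSquare

lemma fin2 : ∀ i : Fin 2, i = 0 ∨ i = 1 := by decide

lemma mem_box3 {c p : Cell 2} :
    p ∈ box 3 c ↔ (c 0 ≤ p 0 ∧ p 0 < c 0 + 3) ∧ (c 1 ≤ p 1 ∧ p 1 < c 1 + 3) := by
  simp only [box, Set.mem_setOf_eq, Fin.forall_fin_two]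
  norm_num

lemma mem_central {p : Cell 2} :
    p ∈ centralSquare ↔ 1 ≤ p 0 ∧ p 0 ≤ 3 ∧ 1 ≤ p 1 ∧ p 1 ≤ 3 := Iff.rfl

lemma central_of_K2 {p : Cell 2} (h : p ∈ K2) : p ∈ centralSquare := by
  obtain ⟨h0, h1⟩ := h
  exact ⟨by omega, by omega, by omega, by omega⟩

lemma boxK {c p : Cell 2} (hb : p ∈ box 3 c) (hc : p ∈ centralSquare) :
    ∃ q ∈ K2, q ∈ box 3 c := by
  rw [mem_box3] at hb
  obtain ⟨hc1, hc2, hc3, hc4⟩ := hc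
  refine ⟨![if c 0 ≤ 1 then 1 else 3, if c 1 ≤ 1 then 1 else 3], ⟨?_, ?_⟩,
      mem_box3.mpr ⟨⟨?_, ?_⟩, ⟨?_, ?_⟩⟩⟩ <;>
    simp only [Matrix.cons_val_zero, Matrix.cons_val_one, Matrix.head_cons] <;>
    split_ifs <;> omega

lemma not_adj_K2 {p q : Cell 2} (hp : p ∈ K2) (hq : q ∈ K2) : ¬ adj p q := by
  rintro ⟨i, hd, -⟩
  obtain ⟨hp0, hp1⟩ := hp; obtain ⟨hq0, hq1⟩ := hq
  have hd' : p i - q i = 1 ∨ p i - q i = -1 :=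
    (abs_eq (by norm_num : (0:ℤ) ≤ 1)).mp hd
  rcases fin2 i with rfl | rfl <;> omega

/-- A protected cell cannot lie in a 3×3 box free of the other modules. -/
lemma noBoxAtK {D : Set (Cell 2)} {a c : Cell 2} (hI : Inv D) (haK : a ∈ K2)
    (hab : a ∈ box 3 c) (he : emptyBox 3 (D \ {a}) c) : False := by
  obtain ⟨hcap, hnb⟩ := hI
  obtain ⟨n, hnD, ⟨i, hdiff, hagree⟩, hnc⟩ := hnb a haK
  have haC : a ∈ centralSquare := central_of_K2 haK
  have hna : n ≠ a := fun h => hnc (h ▸ haC)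
  by_cases hn : n ∈ box 3 c
  · exact he n hn ⟨hnD, hna⟩
  · rw [mem_box3] at hn hab
    rw [mem_central] at hnc
    obtain ⟨h0K, h1K⟩ := haK
    rcases fin2 i with rfl | rfl
    · have hag : a 1 = n 1 := hagree 1 (by decide)
      have hd' : a 0 - n 0 = 1 ∨ a 0 - n 0 = -1 :=
        (abs_eq (by norm_num : (0:ℤ) ≤ 1)).mp hdiff
      have hc0 : c 0 = 1 := by omega
      set q : Cell 2 := Function.update a 0 (4 - a 0) with hqdef
      have hq0 : q 0 = 4 - a 0 := Function.update_self 0 (4 - a 0) a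
      have hq1 : q 1 = a 1 := Function.update_of_ne (by decide) _ _
      have hqK : q ∈ K2 := ⟨by omega, by omega⟩
      have hqbox : q ∈ box 3 c := mem_box3.mpr ⟨⟨by omega, by omega⟩, ⟨by omega, by omega⟩⟩
      have hqD : q ∈ D := by
        have : q ∈ D ∩ centralSquare := by rw [hcap]; exact hqK
        exact this.1
      have hqa : q ≠ a := by
        intro h
        have := congrFun h 0
        rw [hq0] at this
        omega
      exact he q hqbox ⟨hqD, hqa⟩
    · have hag : a 0 = n 0 := hagree 0 (by decide)
      have hd' : a 1 - n 1 = 1 ∨ a 1 - n 1 = -1 :=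
        (abs_eq (by norm_num : (0:ℤ) ≤ 1)).mp hdiff
      have hc1 : c 1 = 1 := by omega
      set q : Cell 2 := Function.update a 1 (4 - a 1) with hqdef
      have hq1 : q 1 = 4 - a 1 := Function.update_self 1 (4 - a 1) a
      have hq0 : q 0 = a 0 := Function.update_of_ne (by decide) _ _
      have hqK : q ∈ K2 := ⟨by omega, by omega⟩
      have hqbox : q ∈ box 3 c := mem_box3.mpr ⟨⟨by omega, by omega⟩, ⟨by omega, by omega⟩⟩
      have hqD : q ∈ D := by
        have : q ∈ D ∩ centralSquare := by rw [hcap]; exact hqK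
        exact this.1
      have hqa : q ≠ a := by
        intro h
        have := congrFun h 1
        rw [hq1] at this
        omega
      exact he q hqbox ⟨hqD, hqa⟩

/-- The invariant holds for the initial configuration. -/
lemma inv_hollow : Inv hollowSquare := by
  constructor
  · ext p
    simp only [Set.mem_inter_iff, hollowSquare, centralSquare, K2, Set.mem_setOf_eq]
    omega
  · intro p hp
    obtain ⟨h0, h1⟩ := hp
    rcases h0 with h0 | h0
    · refine ⟨Function.update p 0 0, ?_, ?_, ?_⟩
      · have e0 : Function.update p 0 0 0 = 0 := Function.update_self 0 0 p
        have e1 : Function.update p 0 0 1 = p 1 := Function.update_of_ne (by decide) _ _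
        exact Or.inl ⟨by omega, by omega, by omega, by omega, Or.inl (by omega)⟩
      · refine ⟨0, ?_, ?_⟩
        · rw [Function.update_self, h0]; norm_num
        · intro j hj
          exact (Function.update_of_ne hj _ _).symm
      · intro hc
        have e0 : Function.update p 0 0 0 = 0 := Function.update_self 0 0 p
        have := hc.1
        omega
    · refine ⟨Function.update p 0 4, ?_, ?_, ?_⟩
      · have e0 : Function.update p 0 4 0 = 4 := Function.update_self 0 4 p
        have e1 : Function.update p 0 4 1 = p 1 := Function.update_of_ne (by decide) _ _
        exact Or.inl ⟨by omega, by omega, by omega, by omega, Or.inr (Or.inl (by omega))⟩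
      · refine ⟨0, ?_, ?_⟩
        · rw [Function.update_self, h0]; norm_num
        · intro j hj
          exact (Function.update_of_ne hj _ _).symm
      · intro hc
        have e0 : Function.update p 0 4 0 = 4 := Function.update_self 0 4 p
        have := hc.2.1
        omega

/-- The key step: a 3-loose move from a configuration satisfying the invariant does not
touch the central square, and preserves the invariant. -/
lemma step {D D' : Set (Cell 2)} {a b : Cell 2} (hI : Inv D)
    (hm : LooseMoveVia 3 D a b D') :
    a ∉ centralSquare ∧ b ∉ centralSquare ∧ Inv D' := by
  obtain ⟨hmove, hD'eq, hconn⟩ := hm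
  have habox : a ∈ D ∧ ∃ c, a ∈ box 3 c ∧ emptyBox 3 (D \ {a}) c := by
    rcases hmove with ⟨haD, -, -, c, h1, -, h3⟩ |
      ⟨m, haD, -, -, -, -, -, -, c₁, c₂, h1, -, -, -, h5, -, -⟩
    · exact ⟨haD, c, h1, h3⟩
    · exact ⟨haD, c₁, h1, h5⟩
  have hbbox : ∃ c, b ∈ box 3 c ∧ emptyBox 3 (D \ {a}) c := by
    rcases hmove with ⟨-, -, -, c, -, h2, h3⟩ |
      ⟨m, -, -, -, -, -, -, -, c₁, c₂, -, -, -, h4, -, h6, -⟩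
    · exact ⟨c, h2, h3⟩
    · exact ⟨c₂, h4, h6⟩
  have haC : a ∉ centralSquare := by
    intro hc
    have haK : a ∈ K2 := by rw [← hI.1]; exact ⟨habox.1, hc⟩
    obtain ⟨c, h1, h2⟩ := habox.2
    exact noBoxAtK hI haK h1 h2
  have hbC : b ∉ centralSquare := by
    intro hc
    obtain ⟨c, h1, h2⟩ := hbbox
    obtain ⟨q, hqK, hqb⟩ := boxK h1 hc
    have hqD : q ∈ D := by
      have : q ∈ D ∩ centralSquare := by rw [hI.1]; exact hqK
      exact this.1
    by_cases hqa : q = a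
    · subst hqa
      exact noBoxAtK hI hqK hqb h2
    · exact h2 q hqb ⟨hqD, hqa⟩
  have hcap' : D' ∩ centralSquare = K2 := by
    rw [hD'eq, ← hI.1]
    ext p
    simp only [Set.mem_inter_iff, Set.mem_insert_iff, Set.mem_diff, Set.mem_singleton_iff]
    constructor
    · rintro ⟨hp1 | ⟨hpD, -⟩, hp2⟩
      · exact absurd hp2 (hp1 ▸ hbC)
      · exact ⟨hpD, hp2⟩
    · rintro ⟨hpD, hp2⟩
      exact ⟨Or.inr ⟨hpD, fun h => haC (h ▸ hp2)⟩, hp2⟩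
  refine ⟨haC, hbC, hcap', ?_⟩
  intro k hkK
  have hkD' : k ∈ D' := by
    have : k ∈ D' ∩ centralSquare := by rw [hcap']; exact hkK
    exact this.1
  obtain ⟨n, hnD, hadj, hnc⟩ := hI.2 k hkK
  by_cases hna : n = a
  · -- replaced neighbor: get a new one from connectivity of `D'`
    set k' : Cell 2 := Function.update k 0 (4 - k 0) with hk'def
    have hk'0 : k' 0 = 4 - k 0 := Function.update_self 0 (4 - k 0) k
    have hk'1 : k' 1 = k 1 := Function.update_of_ne (by decide) _ _
    obtain ⟨hkK0, hkK1⟩ := hkK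
    have hk'K : k' ∈ K2 := ⟨by omega, by omega⟩
    have hk'D' : k' ∈ D' := by
      have : k' ∈ D' ∩ centralSquare := by rw [hcap']; exact hk'K
      exact this.1
    have hkk' : k ≠ k' := by
      intro h
      have := congrFun h 0
      rw [hk'0] at this
      omega
    rcases (hconn k hkD' k' hk'D').cases_head with heq | ⟨n', ⟨hn'D', hadj'⟩, -⟩
    · exact absurd heq hkk'
    · refine ⟨n', hn'D', hadj', ?_⟩
      intro hn'c
      have hn'K : n' ∈ K2 := by
        rw [← hcap']; exact ⟨hn'D', hn'c⟩
      exact not_adj_K2 ⟨hkK0, hkK1⟩ hn'K hadj'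
  · refine ⟨n, ?_, hadj, hnc⟩
    rw [hD'eq]
    exact Or.inr ⟨hnD, hna⟩

/-- impossibility for 3-loose moves in 2D. -/
theorem hollowSquare_unreconfigurable :
    (∀ D : Set (Cell 2), Relation.ReflTransGen (LooseMove 3) hollowSquare D →
      ∀ a b : Cell 2, ∀ D' : Set (Cell 2), LooseMoveVia 3 D a b D' →
        a ∉ centralSquare ∧ b ∉ centralSquare) ∧
    ¬ ∃ L : Set (Cell 2), IsLine 20 L ∧
        Relation.ReflTransGen (LooseMove 3) hollowSquare L := by
  have hinv : ∀ D : Set (Cell 2),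
      Relation.ReflTransGen (LooseMove 3) hollowSquare D → Inv D := by
    intro D h
    induction h with
    | refl => exact inv_hollow
    | tail _ h2 ih =>
      obtain ⟨a, b, hm⟩ := h2
      exact (step ih hm).2.2
  constructor
  · intro D h a b D' hm
    have := step (hinv D h) hm
    exact ⟨this.1, this.2.1⟩
  · rintro ⟨L, ⟨i, c, hLeq⟩, hreach⟩
    have hI := hinv L hreach
    have h1 : (fun _ => (1:ℤ)) ∈ L := by
      have : (fun _ => (1:ℤ)) ∈ L ∩ centralSquare := by
        rw [hI.1]; exact ⟨Or.inl rfl, Or.inl rfl⟩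
      exact this.1
    have h3 : (fun _ => (3:ℤ)) ∈ L := by
      have : (fun _ => (3:ℤ)) ∈ L ∩ centralSquare := by
        rw [hI.1]; exact ⟨Or.inr rfl, Or.inr rfl⟩
      exact this.1
    rw [hLeq] at h1 h3
    obtain ⟨t1, -, he1⟩ := h1
    obtain ⟨t3, -, he3⟩ := h3
    rcases fin2 i with rfl | rfl
    · have e1 : (1:ℤ) = c 1 :=
        (congrFun he1 1).trans (Function.update_of_ne (by decide) _ _)
      have e3 : (3:ℤ) = c 1 :=
        (congrFun he3 1).trans (Function.update_of_ne (by decide) _ _)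
      omega
    · have e1 : (1:ℤ) = c 0 :=
        (congrFun he1 0).trans (Function.update_of_ne (by decide) _ _)
      have e3 : (3:ℤ) = c 0 :=
        (congrFun he3 0).trans (Function.update_of_ne (by decide) _ _)
      omega

end SlidingCubes
end

section
/- If a configuration T ⊆ ℤ³ has external feature size at least 2, then T contains none of the forbidden patterns: there is no axis-aligned box of cells with side lengths 3×1×1, 2×2×1, or 3×2×1 (in any order of axes) that has modules of T at two diagonally opposite corner cells and all remaining cells of the box empty. -/
namespace SlidingCubes

private lemma fin3_cases (i j l k : Fin 3) (hij : i ≠ j) (hil : i ≠ l) (hjl : j ≠ l) :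
    k = i ∨ k = j ∨ k = l := by
  revert hij hil hjl; revert i j l k; decide

private lemma ivt {α : Type*} {S : α → α → Prop} {Q : α → Prop} {g : α → ℤ}
    (hQstep : ∀ u v, S u v → Q v)
    (hg : ∀ u v, S u v → g v ≤ g u + 1 ∧ g u ≤ g v + 1) :
    ∀ {c₁ c₂ : α}, Relation.ReflTransGen S c₁ c₂ → Q c₁ →
      ∀ t : ℤ, ((g c₁ ≤ t ∧ t ≤ g c₂) ∨ (g c₂ ≤ t ∧ t ≤ g c₁)) → ∃ c, Q c ∧ g c = t := by
  intro c₁ c₂ h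
  induction h with
  | refl => intro hQ t ht; exact ⟨c₁, hQ, by omega⟩
  | @tail u v hpath hstep ih =>
      intro hQ t ht
      by_cases h' : (g c₁ ≤ t ∧ t ≤ g u) ∨ (g u ≤ t ∧ t ≤ g c₁)
      · exact ih hQ t h'
      · have hb := hg u v hstep
        exact ⟨v, hQstep u v hstep, by omega⟩

private lemma box_subset_bbox_self {c₁ c₂ : Cell 3} : box 2 c₁ ⊆ bboxPair 2 c₁ c₂ := by
  intro p hp k
  have h := hp k
  omega

private lemma bbox_bounds {c c₁ c₂ : Cell 3} (h : box 2 c ⊆ bboxPair 2 c₁ c₂) (k : Fin 3) :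
    (c₁ k ≤ c k ∨ c₂ k ≤ c k) ∧ (c k ≤ c₁ k ∨ c k ≤ c₂ k) := by
  have hc : c ∈ box 2 c := by simp only [box, Set.mem_setOf_eq]; intro m; omega
  have hc1 : (fun m => c m + 1) ∈ box 2 c := by
    simp only [box, Set.mem_setOf_eq]; intro m; omega
  have H1 := h hc k
  have H2 := h hc1 k
  omega

private lemma notMem_box2 {i j l : Fin 3} (hij : i ≠ j) (hil : i ≠ l) (hjl : j ≠ l)
    {c p : Cell 3} (h : p ∉ box 2 c) :
    (p i < c i ∨ c i + 1 < p i) ∨ (p j < c j ∨ c j + 1 < p j) ∨ (p l < c l ∨ c l + 1 < p l) := by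
  by_contra hcon
  push_neg at hcon
  exact h (by
    simp only [box, Set.mem_setOf_eq]
    intro k
    rcases fin3_cases i j l k hij hil hjl with rfl | rfl | rfl <;> omega)

private lemma adj_bound {i j : Fin 3} (hij : i ≠ j) {u v : Cell 3} (h : adj u v) :
    (u i = v i ∨ u i - v i = 1 ∨ u i - v i = -1) ∧
    (u j = v j ∨ u j - v j = 1 ∨ u j - v j = -1) ∧
    (u i = v i ∨ u j = v j) := by
  obtain ⟨k, hk, hrest⟩ := h
  rw [abs_eq (by norm_num : (0:ℤ) ≤ 1)] at hk
  refine ⟨?_, ?_, ?_⟩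
  · by_cases hki : i = k
    · subst hki; tauto
    · exact Or.inl (hrest i hki)
  · by_cases hkj : j = k
    · subst hkj; tauto
    · exact Or.inl (hrest j hkj)
  · by_cases hki : i = k
    · subst hki; exact Or.inr (hrest j (Ne.symm hij))
    · exact Or.inl (hrest i hki)

private lemma efs2_corner {T : Set (Cell 3)} (hT : EFS2 T) {q₁ q₂ : Cell 3}
    (h1 : q₁ ∉ T) (h2 : q₂ ∉ T) (he : edgeAdj q₁ q₂) :
    ∃ c₁ c₂, q₁ ∈ box 2 c₁ ∧ q₂ ∈ box 2 c₂ ∧ emptyBox 2 T c₁ ∧ emptyBox 2 T c₂ ∧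
      ∀ g : Cell 3 → ℤ, (∀ u v, adj u v → g v ≤ g u + 1 ∧ g u ≤ g v + 1) →
      ∀ t : ℤ, ((g c₁ ≤ t ∧ t ≤ g c₂) ∨ (g c₂ ≤ t ∧ t ≤ g c₁)) →
      ∃ c, emptyBox 2 T c ∧
        (∀ k, (c₁ k ≤ c k ∨ c₂ k ≤ c k) ∧ (c k ≤ c₁ k ∨ c k ≤ c₂ k)) ∧ g c = t := by
  obtain ⟨c₁, c₂, m1, m2, e1, e2, hpath⟩ := hT.2 q₁ q₂ h1 h2 he
  refine ⟨c₁, c₂, m1, m2, e1, e2, ?_⟩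
  intro g hg t ht
  obtain ⟨c, ⟨hce, hcb⟩, hgc⟩ :=
    ivt (S := fun u v => adj u v ∧ emptyBox 2 T v ∧ box 2 v ⊆ bboxPair 2 c₁ c₂)
      (Q := fun c => emptyBox 2 T c ∧ box 2 c ⊆ bboxPair 2 c₁ c₂)
      (fun u v h => ⟨h.2.1, h.2.2⟩) (fun u v h => hg u v h.1) hpath
      ⟨e1, box_subset_bbox_self⟩ t ht
  exact ⟨c, hce, fun k => bbox_bounds hcb k, hgc⟩

private lemma resolve1 {x cx y cy z cz : ℤ}
    (h : (x < cx ∨ cx + 1 < x) ∨ (y < cy ∨ cy + 1 < y) ∨ (z < cz ∨ cz + 1 < z))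
    (hy : cy ≤ y ∧ y < cy + 2) (hz : cz ≤ z ∧ z < cz + 2) : x < cx ∨ cx + 1 < x := by
  omega

private lemma resolve2 {x cx y cy z cz : ℤ}
    (h : (x < cx ∨ cx + 1 < x) ∨ (y < cy ∨ cy + 1 < y) ∨ (z < cz ∨ cz + 1 < z))
    (hx : cx ≤ x ∧ x < cx + 2) (hz : cz ≤ z ∧ z < cz + 2) : y < cy ∨ cy + 1 < y := by
  omega

private lemma resolve12 {x cx y cy z cz : ℤ}
    (h : (x < cx ∨ cx + 1 < x) ∨ (y < cy ∨ cy + 1 < y) ∨ (z < cz ∨ cz + 1 < z))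
    (hz : cz ≤ z ∧ z < cz + 2) : (x < cx ∨ cx + 1 < x) ∨ (y < cy ∨ cy + 1 < y) := by
  omega

private lemma cert_between {w c1 c2 c : ℤ} (h1 : c1 ≤ w ∧ w < c1 + 2) (h2 : c2 ≤ w ∧ w < c2 + 2)
    (hb : (c1 ≤ c ∨ c2 ≤ c) ∧ (c ≤ c1 ∨ c ≤ c2)) : c ≤ w ∧ w < c + 2 := by omega

private lemma cert_min1 {x y c : ℤ} (h : c = min x y) (hxy : x - y = 1 ∨ x - y = -1) :
    c ≤ x ∧ x < c + 2 := by omega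

private lemma cert_min2 {x y c : ℤ} (h : c = min x y) (hxy : x - y = 1 ∨ x - y = -1) :
    c ≤ y ∧ y < c + 2 := by omega

private lemma endgame3 {ai aj al bi bj mi c1i c1j c1l c2i c2j c2l ci cj : ℤ}
  (hm1 : ai - mi = 1 ∨ ai - mi = -1) (hm2 : bi - mi = 1 ∨ bi - mi = -1)
  (hbi : ai - bi = 2 ∨ ai - bi = -2) (hbj : aj - bj = 1 ∨ aj - bj = -1)
  (h1i : c1i ≤ mi ∧ mi < c1i + 2) (h1j : c1j ≤ aj ∧ aj < c1j + 2) (h1l : c1l ≤ al ∧ al < c1l + 2)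
  (h2i : c2i ≤ ai ∧ ai < c2i + 2) (h2j : c2j ≤ bj ∧ bj < c2j + 2) (h2l : c2l ≤ al ∧ al < c2l + 2)
  (A1 : ai < c1i ∨ c1i + 1 < ai)
  (B1 : (bi < c1i ∨ c1i + 1 < bi) ∨ (bj < c1j ∨ c1j + 1 < bj))
  (A2 : aj < c2j ∨ c2j + 1 < aj)
  (B2 : bi < c2i ∨ c2i + 1 < bi)
  (Ac : ai < ci ∨ ci + 1 < ai)
  (Bc : bi < ci ∨ ci + 1 < bi)
  (hgc : cj = min aj bj)
  (hbbi : (c1i ≤ ci ∨ c2i ≤ ci) ∧ (ci ≤ c1i ∨ ci ≤ c2i)) : False := by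
  omega

private lemma between3 {ai aj bi bj mi c1i c1j c2i c2j : ℤ}
  (hm1 : ai - mi = 1 ∨ ai - mi = -1) (hm2 : bi - mi = 1 ∨ bi - mi = -1)
  (hbi : ai - bi = 2 ∨ ai - bi = -2) (hbj : aj - bj = 1 ∨ aj - bj = -1)
  (h1i : c1i ≤ mi ∧ mi < c1i + 2) (h1j : c1j ≤ aj ∧ aj < c1j + 2)
  (h2i : c2i ≤ ai ∧ ai < c2i + 2) (h2j : c2j ≤ bj ∧ bj < c2j + 2)
  (A1 : ai < c1i ∨ c1i + 1 < ai)
  (B1 : (bi < c1i ∨ c1i + 1 < bi) ∨ (bj < c1j ∨ c1j + 1 < bj))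
  (A2 : aj < c2j ∨ c2j + 1 < aj)
  (B2 : bi < c2i ∨ c2i + 1 < bi) :
  (c1j ≤ min aj bj ∧ min aj bj ≤ c2j) ∨ (c2j ≤ min aj bj ∧ min aj bj ≤ c1j) := by
  omega


set_option maxHeartbeats 1000000 in
/-- external feature size at least 2 excludes the forbidden patterns
3×1×1, 2×2×1 and 3×2×1. -/
theorem efs2_no_forbidden_patterns (T : Set (Cell 3)) (hT : EFS2 T) :
    ¬ ∃ a b : Cell 3, a ∈ T ∧ b ∈ T ∧
      (∃ i j l : Fin 3, i ≠ j ∧ i ≠ l ∧ j ≠ l ∧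
        ((|a i - b i| = 2 ∧ |a j - b j| = 0 ∧ |a l - b l| = 0) ∨
         (|a i - b i| = 1 ∧ |a j - b j| = 1 ∧ |a l - b l| = 0) ∨
         (|a i - b i| = 2 ∧ |a j - b j| = 1 ∧ |a l - b l| = 0))) ∧
      (∀ p : Cell 3, (∀ i, min (a i) (b i) ≤ p i ∧ p i ≤ max (a i) (b i)) →
        p ≠ a → p ≠ b → p ∉ T) := by
  rintro ⟨a, b, ha, hb, ⟨i, j, l, hij, hil, hjl, hpat⟩, hemp⟩
  rcases hpat with ⟨habsi, habsj, habsl⟩ | ⟨habsi, habsj, habsl⟩ | ⟨habsi, habsj, habsl⟩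
  · -- 3×1×1
    rw [abs_eq (by norm_num : (0:ℤ) ≤ 2)] at habsi
    rw [abs_eq_zero, sub_eq_zero] at habsj habsl
    obtain ⟨mi, hm1, hm2⟩ : ∃ mi, (a i - mi = 1 ∨ a i - mi = -1) ∧
        (b i - mi = 1 ∨ b i - mi = -1) := by
      rcases habsi with h | h
      · exact ⟨a i - 1, by omega, by omega⟩
      · exact ⟨a i + 1, by omega, by omega⟩
    have hmT : Function.update a i mi ∉ T := by
      apply hemp
      · intro k
        rcases fin3_cases i j l k hij hil hjl with rfl | rfl | rfl
        · rw [Function.update_self]; omega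
        · rw [Function.update_of_ne (Ne.symm hij)]; omega
        · rw [Function.update_of_ne (Ne.symm hil)]; omega
      · intro hEq; have := congrFun hEq i; rw [Function.update_self] at this; omega
      · intro hEq; have := congrFun hEq i; rw [Function.update_self] at this; omega
    obtain ⟨c, hmc, hce⟩ := hT.1 _ hmT
    simp only [box, Set.mem_setOf_eq, Nat.cast_ofNat] at hmc
    have hci := hmc i; have hcj := hmc j; have hcl := hmc l
    rw [Function.update_self] at hci
    rw [Function.update_of_ne (Ne.symm hij)] at hcj
    rw [Function.update_of_ne (Ne.symm hil)] at hcl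
    have hab : a ∈ box 2 c ∨ b ∈ box 2 c := by
      simp only [box, Set.mem_setOf_eq, Nat.cast_ofNat]
      rcases em (c i ≤ a i ∧ a i ≤ c i + 1) with hh | hh
      · left; intro k
        rcases fin3_cases i j l k hij hil hjl with rfl | rfl | rfl <;> omega
      · right; intro k
        rcases fin3_cases i j l k hij hil hjl with rfl | rfl | rfl <;> omega
    rcases hab with hm | hm
    · exact hce a hm ha
    · exact hce b hm hb
  · -- 2×2×1
    have hbi := habsi; rw [abs_eq (by norm_num : (0:ℤ) ≤ 1)] at hbi
    have hbj := habsj; rw [abs_eq (by norm_num : (0:ℤ) ≤ 1)] at hbj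
    rw [abs_eq_zero, sub_eq_zero] at habsl
    have hq1T : Function.update a j (b j) ∉ T := by
      apply hemp
      · intro k
        rcases fin3_cases i j l k hij hil hjl with rfl | rfl | rfl
        · rw [Function.update_of_ne hij]; omega
        · rw [Function.update_self]; omega
        · rw [Function.update_of_ne (Ne.symm hjl)]; omega
      · intro hEq; have := congrFun hEq j; rw [Function.update_self] at this; omega
      · intro hEq; have := congrFun hEq i; rw [Function.update_of_ne hij] at this; omega
    have hq2T : Function.update a i (b i) ∉ T := by
      apply hemp
      · intro k
        rcases fin3_cases i j l k hij hil hjl with rfl | rfl | rfl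
        · rw [Function.update_self]; omega
        · rw [Function.update_of_ne (Ne.symm hij)]; omega
        · rw [Function.update_of_ne (Ne.symm hil)]; omega
      · intro hEq; have := congrFun hEq i; rw [Function.update_self] at this; omega
      · intro hEq; have := congrFun hEq j
        rw [Function.update_of_ne (Ne.symm hij)] at this; omega
    have hedge : edgeAdj (Function.update a j (b j)) (Function.update a i (b i)) := by
      refine ⟨i, j, hij, ?_, ?_, ?_⟩
      · rw [Function.update_of_ne hij, Function.update_self]; exact habsi
      · rw [Function.update_self, Function.update_of_ne (Ne.symm hij)]
        rw [abs_sub_comm]; exact habsj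
      · intro m hmi hmj
        rcases fin3_cases i j l m hij hil hjl with rfl | rfl | rfl
        · exact absurd rfl hmi
        · exact absurd rfl hmj
        · rw [Function.update_of_ne (Ne.symm hjl), Function.update_of_ne (Ne.symm hil)]
    obtain ⟨c₁, c₂, m1, m2, e1, e2, W⟩ := efs2_corner hT hq1T hq2T hedge
    simp only [box, Set.mem_setOf_eq, Nat.cast_ofNat] at m1 m2
    have h1i := m1 i; have h1j := m1 j; have h1l := m1 l
    have h2i := m2 i; have h2j := m2 j; have h2l := m2 l
    rw [Function.update_of_ne hij] at h1i
    rw [Function.update_self] at h1j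
    rw [Function.update_of_ne (Ne.symm hjl)] at h1l
    rw [Function.update_self] at h2i
    rw [Function.update_of_ne (Ne.symm hij)] at h2j
    rw [Function.update_of_ne (Ne.symm hil)] at h2l
    have h1lb := h1l; rw [habsl] at h1lb
    have h2lb := h2l; rw [habsl] at h2lb
    have A1 := resolve2 (notMem_box2 hij hil hjl (fun h => e1 a h ha)) h1i h1l
    have B1 := resolve1 (notMem_box2 hij hil hjl (fun h => e1 b h hb)) h1j h1lb
    have A2 := resolve1 (notMem_box2 hij hil hjl (fun h => e2 a h ha)) h2j h2l
    have B2 := resolve2 (notMem_box2 hij hil hjl (fun h => e2 b h hb)) h2i h2lb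
    clear m1 m2 hemp hedge hq1T hq2T
    have hgadj1 : ∀ u v : Cell 3, adj u v →
        (fun c : Cell 3 => c i - c j) v ≤ (fun c : Cell 3 => c i - c j) u + 1 ∧
        (fun c : Cell 3 => c i - c j) u ≤ (fun c : Cell 3 => c i - c j) v + 1 := by
      intro u v huv
      have hB := adj_bound hij huv
      beta_reduce
      omega
    have hgadj2 : ∀ u v : Cell 3, adj u v →
        (fun c : Cell 3 => c i + c j) v ≤ (fun c : Cell 3 => c i + c j) u + 1 ∧
        (fun c : Cell 3 => c i + c j) u ≤ (fun c : Cell 3 => c i + c j) v + 1 := by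
      intro u v huv
      have hB := adj_bound hij huv
      beta_reduce
      omega
    rcases hbi with hbi | hbi <;> rcases hbj with hbj | hbj
    · obtain ⟨c, hce, hcb, hgc⟩ := W _ hgadj1 (a i - a j) (by beta_reduce; omega)
      have hgc' : c i - c j = a i - a j := hgc
      have hbbi := hcb i; have hbbj := hcb j; have hbbl := hcb l
      have Ac := resolve12 (notMem_box2 hij hil hjl (fun h => hce a h ha))
        (cert_between h1l h2l hbbl)
      have Bc := resolve12 (notMem_box2 hij hil hjl (fun h => hce b h hb))
        (cert_between h1lb h2lb hbbl)
      omega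
    · obtain ⟨c, hce, hcb, hgc⟩ := W _ hgadj2 (a i + a j - 1) (by beta_reduce; omega)
      have hgc' : c i + c j = a i + a j - 1 := hgc
      have hbbi := hcb i; have hbbj := hcb j; have hbbl := hcb l
      have Ac := resolve12 (notMem_box2 hij hil hjl (fun h => hce a h ha))
        (cert_between h1l h2l hbbl)
      have Bc := resolve12 (notMem_box2 hij hil hjl (fun h => hce b h hb))
        (cert_between h1lb h2lb hbbl)
      omega
    · obtain ⟨c, hce, hcb, hgc⟩ := W _ hgadj2 (a i + a j - 1) (by beta_reduce; omega)
      have hgc' : c i + c j = a i + a j - 1 := hgc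
      have hbbi := hcb i; have hbbj := hcb j; have hbbl := hcb l
      have Ac := resolve12 (notMem_box2 hij hil hjl (fun h => hce a h ha))
        (cert_between h1l h2l hbbl)
      have Bc := resolve12 (notMem_box2 hij hil hjl (fun h => hce b h hb))
        (cert_between h1lb h2lb hbbl)
      omega
    · obtain ⟨c, hce, hcb, hgc⟩ := W _ hgadj1 (a i - a j) (by beta_reduce; omega)
      have hgc' : c i - c j = a i - a j := hgc
      have hbbi := hcb i; have hbbj := hcb j; have hbbl := hcb l
      have Ac := resolve12 (notMem_box2 hij hil hjl (fun h => hce a h ha))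
        (cert_between h1l h2l hbbl)
      have Bc := resolve12 (notMem_box2 hij hil hjl (fun h => hce b h hb))
        (cert_between h1lb h2lb hbbl)
      omega
  · -- 3×2×1
    have hbi := habsi; rw [abs_eq (by norm_num : (0:ℤ) ≤ 2)] at hbi
    have hbj := habsj; rw [abs_eq (by norm_num : (0:ℤ) ≤ 1)] at hbj
    rw [abs_eq_zero, sub_eq_zero] at habsl
    obtain ⟨mi, hm1, hm2⟩ : ∃ mi, (a i - mi = 1 ∨ a i - mi = -1) ∧
        (b i - mi = 1 ∨ b i - mi = -1) := by
      rcases hbi with h | h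
      · exact ⟨a i - 1, by omega, by omega⟩
      · exact ⟨a i + 1, by omega, by omega⟩
    have hq1T : Function.update a i mi ∉ T := by
      apply hemp
      · intro k
        rcases fin3_cases i j l k hij hil hjl with rfl | rfl | rfl
        · rw [Function.update_self]; omega
        · rw [Function.update_of_ne (Ne.symm hij)]; omega
        · rw [Function.update_of_ne (Ne.symm hil)]; omega
      · intro hEq; have := congrFun hEq i; rw [Function.update_self] at this; omega
      · intro hEq; have := congrFun hEq i; rw [Function.update_self] at this; omega
    have hq2T : Function.update a j (b j) ∉ T := by
      apply hemp
      · intro k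
        rcases fin3_cases i j l k hij hil hjl with rfl | rfl | rfl
        · rw [Function.update_of_ne hij]; omega
        · rw [Function.update_self]; omega
        · rw [Function.update_of_ne (Ne.symm hjl)]; omega
      · intro hEq; have := congrFun hEq j; rw [Function.update_self] at this; omega
      · intro hEq; have := congrFun hEq i; rw [Function.update_of_ne hij] at this; omega
    have hedge : edgeAdj (Function.update a i mi) (Function.update a j (b j)) := by
      refine ⟨i, j, hij, ?_, ?_, ?_⟩
      · rw [Function.update_self, Function.update_of_ne hij]
        rw [abs_eq (by norm_num : (0:ℤ) ≤ 1)]; omega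
      · rw [Function.update_of_ne (Ne.symm hij), Function.update_self]; exact habsj
      · intro m hmi hmj
        rcases fin3_cases i j l m hij hil hjl with rfl | rfl | rfl
        · exact absurd rfl hmi
        · exact absurd rfl hmj
        · rw [Function.update_of_ne (Ne.symm hil), Function.update_of_ne (Ne.symm hjl)]
    obtain ⟨c₁, c₂, m1, m2, e1, e2, W⟩ := efs2_corner hT hq1T hq2T hedge
    simp only [box, Set.mem_setOf_eq, Nat.cast_ofNat] at m1 m2
    have h1i := m1 i; have h1j := m1 j; have h1l := m1 l
    have h2i := m2 i; have h2j := m2 j; have h2l := m2 l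
    rw [Function.update_self] at h1i
    rw [Function.update_of_ne (Ne.symm hij)] at h1j
    rw [Function.update_of_ne (Ne.symm hil)] at h1l
    rw [Function.update_of_ne hij] at h2i
    rw [Function.update_self] at h2j
    rw [Function.update_of_ne (Ne.symm hjl)] at h2l
    have h1lb := h1l; rw [habsl] at h1lb
    have h2lb := h2l; rw [habsl] at h2lb
    have A1 := resolve1 (notMem_box2 hij hil hjl (fun h => e1 a h ha)) h1j h1l
    have B1 := resolve12 (notMem_box2 hij hil hjl (fun h => e1 b h hb)) h1lb
    have A2 := resolve2 (notMem_box2 hij hil hjl (fun h => e2 a h ha)) h2i h2l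
    have B2 := resolve1 (notMem_box2 hij hil hjl (fun h => e2 b h hb)) h2j h2lb
    clear m1 m2 hemp hedge hq1T hq2T
    have hgadjj : ∀ u v : Cell 3, adj u v →
        (fun c : Cell 3 => c j) v ≤ (fun c : Cell 3 => c j) u + 1 ∧
        (fun c : Cell 3 => c j) u ≤ (fun c : Cell 3 => c j) v + 1 := by
      intro u v huv
      have hB := adj_bound hij huv
      beta_reduce
      omega
    obtain ⟨c, hce, hcb, hgc⟩ := W _ hgadjj (min (a j) (b j))
      (between3 hm1 hm2 hbi hbj h1i h1j h2i h2j A1 B1 A2 B2)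
    have hgc' : c j = min (a j) (b j) := hgc
    have hbbi := hcb i; have hbbj := hcb j; have hbbl := hcb l
    have Ac := resolve1 (notMem_box2 hij hil hjl (fun h => hce a h ha))
      (cert_min1 hgc' hbj) (cert_between h1l h2l hbbl)
    have Bc := resolve1 (notMem_box2 hij hil hjl (fun h => hce b h hb))
      (cert_min2 hgc' hbj) (cert_between h1lb h2lb hbbl)
    exact endgame3 hm1 hm2 hbi hbj h1i h1j h1l h2i h2j h2l A1 B1 A2 B2 Ac Bc hgc' hbbi

end SlidingCubes
end

section
/- Let R ⊆ ℤ³ be a connected configuration whose slice graph H is connected and has more than one vertex, and let s₀ be the slice of H containing a module of globally maximal z-coordinate. Then H contains a locally extremal slice s ≠ s₀ such that deleting the vertex s from H leaves the graph H connected. -/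
namespace Relation

variable {α β : Type*} {r : α → α → Prop}

def Restrict (r : α → α → Prop) (T : Set α) (a b : α) : Prop :=
  r a b ∧ a ∈ T ∧ b ∈ T

instance [Std.Symm r] {T : Set α} : Std.Symm (Restrict r T) :=
  ⟨fun _ _ h => ⟨Std.Symm.symm _ _ h.1, h.2.2, h.2.1⟩⟩

theorem ReflTransGen.restrict_reachable {a b : α} (h : ReflTransGen r a b) :
    ReflTransGen (Restrict r {x | ReflTransGen r a x}) a b := by
  induction h with
  | refl => rfl
  | tail hac hcb ih => exact ih.tail ⟨hcb, hac, hac.tail hcb⟩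

theorem ReflTransGen.exists_restrict_compl_singleton {a e : α} (h : ReflTransGen r a e)
    (ha : a ≠ e) : ∃ x, ReflTransGen (Restrict r {e}ᶜ) a x ∧ r x e := by
  induction h using ReflTransGen.head_induction_on with
  | refl => exact absurd rfl ha
  | @head a c hac _ ih =>
    by_cases hc : c = e
    · exact ⟨a, .refl, hc ▸ hac⟩
    · obtain ⟨x, hcx, hxe⟩ := ih hc
      exact ⟨x, .head ⟨hac, ha, hc⟩ hcx, hxe⟩

section Component

variable {e w : α}

def reachAvoiding (r : α → α → Prop) (e w : α) : Set α :=
  {x | ReflTransGen (Restrict r {e}ᶜ) w x}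

theorem mem_insert_reachAvoiding_of_rel {x y : α} (hx : x ∈ reachAvoiding r e w) (hxe : x ≠ e)
    (hxy : r x y) : y ∈ insert e (reachAvoiding r e w) := by
  by_cases hye : y = e
  · exact .inl hye
  · exact .inr (ReflTransGen.tail hx ⟨hxy, hxe, hye⟩)

theorem reflTransGen_restrict_insert_reachAvoiding [Std.Symm r] (hwe : ReflTransGen r w e)
    (hw : w ≠ e) :
    ∀ a ∈ insert e (reachAvoiding r e w), ∀ b ∈ insert e (reachAvoiding r e w),
      ReflTransGen (Restrict r (insert e (reachAvoiding r e w))) a b := by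
  have hreach : ∀ a ∈ reachAvoiding r e w,
      ReflTransGen (Restrict r (insert e (reachAvoiding r e w))) w a := fun a ha =>
    ReflTransGen.mono (fun u v h => ⟨h.1.1, .inr h.2.1, .inr h.2.2⟩) _ _ ha.restrict_reachable
  have hreachT : ∀ a ∈ insert e (reachAvoiding r e w),
      ReflTransGen (Restrict r (insert e (reachAvoiding r e w))) w a := by
    rintro a (rfl | ha)
    · obtain ⟨x, hwx, hxa⟩ := hwe.exists_restrict_compl_singleton hw
      exact (hreach x hwx).tail ⟨hxa, .inr hwx, .inl rfl⟩
    · exact hreach a ha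
  intro a ha b hb
  exact (Std.Symm.symm _ _ (hreachT a ha)).trans (hreachT b hb)

theorem reflTransGen_restrict_compl_of_not_mem [Std.Symm r] {s a : α}
    (hs : s ∈ reachAvoiding r e w) (hse : s ≠ e) (hae : ReflTransGen r a e)
    (ha : a ∉ insert e (reachAvoiding r e w)) :
    ReflTransGen (Restrict r {s}ᶜ) a e := by
  obtain ⟨x, hax, hxe⟩ := hae.exists_restrict_compl_singleton (fun h => ha (.inl h))
  have havoid : ∀ y, ReflTransGen (Restrict r {e}ᶜ) a y → y ≠ s := by
    rintro y hay rfl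
    exact ha (.inr (ReflTransGen.trans hs (Std.Symm.symm _ _ hay)))
  exact (ReflTransGen.mono (fun u v h => ⟨h.1.1, havoid u h.2.1, havoid v h.2.2⟩) _ _
    hax.restrict_reachable).tail ⟨hxe, havoid x hax, hse.symm⟩

end Component

section LocalExtremum

variable [LinearOrder β]

def IsLocalExtremum (r : α → α → Prop) (z : α → β) (s : α) : Prop :=
  (∀ b, r s b → z b < z s) ∨ ∀ b, r s b → z s < z b

theorem IsLocalExtremum.of_le {r' : α → α → Prop} {z : α → β} {s : α}
    (h : IsLocalExtremum r' z s) (hr : ∀ b, r s b → r' s b) : IsLocalExtremum r z s :=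
  h.imp (fun h b hb => h b (hr b hb)) (fun h b hb => h b (hr b hb))

variable {z : α → β}

theorem exists_isLocalExtremum_ne {S : Finset α} (hr : ∀ a b, r a b → a ∈ S ∧ b ∈ S)
    (hz : ∀ a b, r a b → z a ≠ z b) (hconn : ∀ a ∈ S, ∀ b ∈ S, ReflTransGen r a b)
    (hS : 1 < S.card) (t : α) : ∃ e ∈ S, e ≠ t ∧ IsLocalExtremum r z e := by
  obtain ⟨a, ha, b, hb, hab⟩ := Finset.one_lt_card.mp hS
  obtain ⟨m, hm, hmin⟩ := S.exists_min_image z ⟨a, ha⟩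
  obtain ⟨M, hM, hmax⟩ := S.exists_max_image z ⟨a, ha⟩
  have hmM : m ≠ M := by
    obtain ⟨c, hac, -⟩ := ((hconn a ha b hb).cases_head).resolve_left hab
    have hc := (hr a c hac).2
    have := hz a c hac
    have := hmin a ha; have := hmax a ha; have := hmin c hc; have := hmax c hc
    rintro rfl
    order
  have hMmax : IsLocalExtremum r z M :=
    .inl fun b hb => (hmax b (hr M b hb).2).lt_of_ne (hz M b hb).symm
  have hmmin : IsLocalExtremum r z m :=
    .inr fun b hb => (hmin b (hr m b hb).2).lt_of_ne (hz m b hb)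
  by_cases hMt : M = t
  · exact ⟨m, hm, hMt ▸ hmM, hmmin⟩
  · exact ⟨M, hM, hMt, hMmax⟩

theorem exists_isLocalExtremum_forall_reflTransGen_restrict [Std.Symm r] (S : Finset α)
    (hr : ∀ a b, r a b → a ∈ S ∧ b ∈ S) (hz : ∀ a b, r a b → z a ≠ z b)
    (hconn : ∀ a ∈ S, ∀ b ∈ S, ReflTransGen r a b) (hS : 1 < S.card) {t : α} (ht : t ∈ S) :
    ∃ s ∈ S, s ≠ t ∧ IsLocalExtremum r z s ∧
      ∀ a ∈ S, ∀ b ∈ S, a ≠ s → b ≠ s → ReflTransGen (Restrict r {s}ᶜ) a b := by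
  classical
  induction S using Finset.strongInduction generalizing r t with
  | H S ih =>
  obtain ⟨e, heS, het, he⟩ := exists_isLocalExtremum_ne hr hz hconn hS t
  by_cases hcut : ∀ a ∈ S, ∀ b ∈ S, a ≠ e → b ≠ e → ReflTransGen (Restrict r {e}ᶜ) a b
  · exact ⟨e, heS, het, he, hcut⟩
  obtain ⟨w, hwS, hwe, hwt⟩ : ∃ w ∈ S, w ≠ e ∧ t ∉ reachAvoiding r e w := by
    push Not at hcut
    obtain ⟨a, ha, b, hb, hae, hbe, hab⟩ := hcut
    by_cases hat : t ∈ reachAvoiding r e a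
    · exact ⟨b, hb, hbe, fun hbt => hab (ReflTransGen.trans hat (Std.Symm.symm _ _ hbt))⟩
    · exact ⟨a, ha, hae, hat⟩
  set T := insert e (reachAvoiding r e w)
  have hS' : S.filter (· ∈ T) ⊂ S :=
    Finset.filter_ssubset.mpr ⟨t, ht, by rintro (rfl | h) <;> trivial⟩
  have heS' : e ∈ S.filter (· ∈ T) := Finset.mem_filter.mpr ⟨heS, .inl rfl⟩
  obtain ⟨s, hsS', hse, hs, hsconn⟩ := ih _ hS' (r := Restrict r T)
    (fun a b h => ⟨Finset.mem_filter.mpr ⟨(hr a b h.1).1, h.2.1⟩,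
      Finset.mem_filter.mpr ⟨(hr a b h.1).2, h.2.2⟩⟩)
    (fun a b h => hz a b h.1)
    (fun a ha b hb => reflTransGen_restrict_insert_reachAvoiding (hconn w hwS e heS) hwe a
      (Finset.mem_filter.mp ha).2 b (Finset.mem_filter.mp hb).2)
    (Finset.one_lt_card.mpr ⟨w, Finset.mem_filter.mpr ⟨hwS, .inr .refl⟩, e, heS', hwe⟩) heS'
  obtain ⟨hsS, hsT⟩ := Finset.mem_filter.mp hsS'
  have hsK : s ∈ reachAvoiding r e w := hsT.resolve_left hse
  have hto_e : ∀ a ∈ S, a ≠ s → ReflTransGen (Restrict r {s}ᶜ) a e := by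
    intro a ha has
    by_cases haT : a ∈ T
    · exact ReflTransGen.mono (fun u v h => ⟨h.1.1, h.2⟩) _ _
        (hsconn a (Finset.mem_filter.mpr ⟨ha, haT⟩) e heS' has hse.symm)
    · exact reflTransGen_restrict_compl_of_not_mem hsK hse (hconn a ha e heS) haT
  refine ⟨s, hsS, fun hst => hwt (hst ▸ hsK),
    hs.of_le fun b hb => ⟨hb, hsT, mem_insert_reachAvoiding_of_rel hsK hse hb⟩, ?_⟩
  intro a ha b hb has hbs
  exact (hto_e a ha has).trans (Std.Symm.symm _ _ (hto_e b hb hbs))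

end LocalExtremum

end Relation

namespace SlidingCubes

theorem adj_symm {d : ℕ} {a b : Cell d} (h : adj a b) : adj b a := by
  obtain ⟨i, hi, heq⟩ := h
  exact ⟨i, by rwa [abs_sub_comm], fun j hj => (heq j hj).symm⟩

section Layer

variable {R : Set (Cell 3)} {x p : Cell 3}

theorem mem_layerComp_self : x ∈ layerComp R x := Relation.ReflTransGen.refl

theorem mem_and_height_eq_of_mem_layerComp (hx : x ∈ R) (hp : p ∈ layerComp R x) :
    p ∈ R ∧ p 2 = x 2 := by
  induction hp with
  | refl => exact ⟨hx, rfl⟩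
  | tail _ h => exact ⟨h.1, h.2.1⟩

theorem mem_layerComp_comm (hx : x ∈ R) (hp : p ∈ layerComp R x) : x ∈ layerComp R p := by
  induction hp with
  | refl => exact mem_layerComp_self
  | @tail u v hxu huv ih =>
    obtain ⟨huR, hux⟩ := mem_and_height_eq_of_mem_layerComp hx hxu
    change Relation.ReflTransGen (fun a b => b ∈ R ∧ b 2 = v 2 ∧ adj a b) v x
    rw [huv.2.1.trans hux.symm]
    exact .head ⟨huR, rfl, adj_symm huv.2.2⟩ ih

theorem layerComp_eq_of_mem (hx : x ∈ R) (hp : p ∈ layerComp R x) :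
    layerComp R p = layerComp R x := by
  have hxp : x ∈ layerComp R p := mem_layerComp_comm hx hp
  ext q
  change Relation.ReflTransGen (fun a b => b ∈ R ∧ b 2 = p 2 ∧ adj a b) p q ↔
    Relation.ReflTransGen (fun a b => b ∈ R ∧ b 2 = x 2 ∧ adj a b) x q
  change Relation.ReflTransGen (fun a b => b ∈ R ∧ b 2 = p 2 ∧ adj a b) p x at hxp
  rw [(mem_and_height_eq_of_mem_layerComp hx hp).2] at hxp ⊢
  exact ⟨hp.trans, hxp.trans⟩

end Layer

open Classical in
noncomputable def sliceHeight (s : Set (Cell 3)) : ℤ :=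
  if h : s.Nonempty then h.some 2 else 0

section Slice

variable {R s s₁ s₂ : Set (Cell 3)}

theorem IsSlice.subset (hs : IsSlice R s) : s ⊆ R := by
  obtain ⟨⟨x, hx, rfl⟩, -⟩ := hs
  exact fun p hp => (mem_and_height_eq_of_mem_layerComp hx hp).1

theorem IsSlice.height_eq (hs : IsSlice R s) {p : Cell 3} (hp : p ∈ s) :
    p 2 = sliceHeight s := by
  obtain ⟨⟨x, hx, rfl⟩, -⟩ := hs
  rw [sliceHeight, dif_pos ⟨p, hp⟩, (mem_and_height_eq_of_mem_layerComp hx hp).2,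
    (mem_and_height_eq_of_mem_layerComp hx (Set.Nonempty.some_mem ⟨p, hp⟩)).2]

theorem finite_setOf_isSlice (hR : R.Finite) : {s | IsSlice R s}.Finite :=
  hR.finite_subsets.subset fun _ => IsSlice.subset

instance : Std.Symm (sliceAdj R) :=
  ⟨fun _ _ ⟨h₁, h₂, hne, p, hp, q, hq, hpq⟩ => ⟨h₂, h₁, hne.symm, q, hq, p, hp, adj_symm hpq⟩⟩

/-- Adjacent modules at the same height lie in the same layer component. -/
theorem sliceHeight_ne_of_sliceAdj (h : sliceAdj R s₁ s₂) :
    sliceHeight s₁ ≠ sliceHeight s₂ := by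
  obtain ⟨h₁, h₂, hne, p, hp, q, hq, hpq⟩ := h
  intro heq
  have hqp : q 2 = p 2 := by rw [h₁.height_eq hp, h₂.height_eq hq, heq]
  obtain ⟨⟨x₁, hx₁, rfl⟩, -⟩ := h₁
  obtain ⟨⟨x₂, hx₂, rfl⟩, -⟩ := h₂
  have hq₁ : q ∈ layerComp R x₁ := Relation.ReflTransGen.tail hp
    ⟨(mem_and_height_eq_of_mem_layerComp hx₂ hq).1,
      hqp.trans (mem_and_height_eq_of_mem_layerComp hx₁ hp).2, hpq⟩
  exact hne (by rw [← layerComp_eq_of_mem hx₁ hq₁, ← layerComp_eq_of_mem hx₂ hq])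

theorem locallyExtremal_of_isLocalExtremum (hs : IsSlice R s)
    (h : Relation.IsLocalExtremum (sliceAdj R) sliceHeight s) : LocallyExtremal R s := by
  refine h.imp (fun h => ⟨hs, fun s' hss' p hp q hq => ?_⟩)
    (fun h => ⟨hs, fun s' hss' p hp q hq => ?_⟩)
  · rw [hss'.2.1.height_eq hp, hs.height_eq hq]; exact h s' hss'
  · rw [hss'.2.1.height_eq hp, hs.height_eq hq]; exact h s' hss'

end Slice

theorem exists_removable_extremal_slice_general (R : Set (Cell 3)) (hfin : R.Finite)
    (hHconn : ∀ s₁ s₂, IsSlice R s₁ → IsSlice R s₂ →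
      Relation.ReflTransGen (sliceAdj R) s₁ s₂)
    (hmany : ∃ s₁ s₂ : Set (Cell 3), IsSlice R s₁ ∧ IsSlice R s₂ ∧ s₁ ≠ s₂)
    (s₀ : Set (Cell 3)) (hs₀ : IsSlice R s₀) :
    ∃ s : Set (Cell 3), IsSlice R s ∧ s ≠ s₀ ∧ LocallyExtremal R s ∧
      ∀ s₁ s₂, IsSlice R s₁ → IsSlice R s₂ → s₁ ≠ s → s₂ ≠ s →
        Relation.ReflTransGen (fun u v => sliceAdj R u v ∧ u ≠ s ∧ v ≠ s) s₁ s₂ := by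
  have hmem : ∀ s, s ∈ (finite_setOf_isSlice hfin).toFinset ↔ IsSlice R s :=
    fun _ => Set.Finite.mem_toFinset _
  obtain ⟨s₁, s₂, h₁, h₂, hne⟩ := hmany
  obtain ⟨s, hs, hss₀, hext, hrem⟩ :=
    Relation.exists_isLocalExtremum_forall_reflTransGen_restrict _ (z := sliceHeight)
      (fun a b h => ⟨(hmem a).2 h.1, (hmem b).2 h.2.1⟩) (fun _ _ => sliceHeight_ne_of_sliceAdj)
      (fun a ha b hb => hHconn a b ((hmem a).1 ha) ((hmem b).1 hb))
      (Finset.one_lt_card.mpr ⟨s₁, (hmem _).2 h₁, s₂, (hmem _).2 h₂, hne⟩) ((hmem s₀).2 hs₀)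
  have hsR := (hmem s).1 hs
  exact ⟨s, hsR, hss₀, locallyExtremal_of_isLocalExtremum hsR hext,
    fun a b ha hb has hbs => hrem a ((hmem a).2 ha) b ((hmem b).2 hb) has hbs⟩

/-- existence of a removable locally extremal slice (Lemma slice-connectivity). -/
theorem exists_removable_extremal_slice (R : Set (Cell 3)) (hfin : R.Finite)
    (hconn : ConnectedConf R)
    (hHconn : ∀ s₁ s₂, IsSlice R s₁ → IsSlice R s₂ →
      Relation.ReflTransGen (sliceAdj R) s₁ s₂)
    (hmany : ∃ s₁ s₂ : Set (Cell 3), IsSlice R s₁ ∧ IsSlice R s₂ ∧ s₁ ≠ s₂)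
    (s₀ : Set (Cell 3)) (hs₀ : IsSlice R s₀)
    (htop : ∃ m ∈ s₀, ∀ p ∈ R, p 2 ≤ m 2) :
    ∃ s : Set (Cell 3), IsSlice R s ∧ s ≠ s₀ ∧ LocallyExtremal R s ∧
      ∀ s₁ s₂, IsSlice R s₁ → IsSlice R s₂ → s₁ ≠ s → s₂ ≠ s →
        Relation.ReflTransGen (fun u v => sliceAdj R u v ∧ u ≠ s ∧ v ≠ s) s₁ s₂ :=
  exists_removable_extremal_slice_general R hfin hHconn hmany s₀ hs₀

end SlidingCubes
end
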